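/- Let R be an irreducible crystallographic root system spanning a finite-dimensional real vector space V, with Weyl group W, fixed base of simple roots {α_i}, fundamental Weyl chamber C_f and positive cone C⁺. For every x ∈ C_f, the intersection of the dual convex hull of the Weyl orbit W.x with the fundamental Weyl chamber equals the set of dominant points dominated by x; that is, dconv(W.x) ∩ C_f = { y ∈ C_f : x − y ∈ C⁺ }. -/

import Mathlib

/-- A finite crystallographic root system in a real vector space `V`, together with a fixed
base of simple roots indexed by `ι` (which form a basis of `V`). For each root `α`, the
coroot `α^∨` is recorded as a linear functional on `V` with `⟨α^∨, α⟩ = 2`, such that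
the reflection `v ↦ v - ⟨α^∨, v⟩ • α` preserves the root set, and all Cartan pairings
`⟨α^∨, β⟩` are integers. Every root is a nonnegative or nonpositive combination of the
simple roots. -/
structure RootSystemWithBase (ι V : Type*) [Fintype ι] [AddCommGroup V] [Module ℝ V] where
  /-- the set of roots -/
  R : Set V
  finR : R.Finite
  /-- the coroot `α^∨ ∈ V*` of a root `α` (junk value off `R`) -/
  coroot : V → V →ₗ[ℝ] ℝ
  coroot_self : ∀ α ∈ R, coroot α α = 2
  reflect_mem : ∀ α ∈ R, ∀ β ∈ R, β - coroot α β • α ∈ R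
  crystallographic : ∀ α ∈ R, ∀ β ∈ R, ∃ n : ℤ, coroot α β = (n : ℝ)
  /-- the simple roots, forming a basis of `V` -/
  simple : Module.Basis ι ℝ V
  simple_mem : ∀ i, simple i ∈ R
  base_prop : ∀ α ∈ R, (∀ i, 0 ≤ simple.repr α i) ∨ (∀ i, simple.repr α i ≤ 0)

namespace RootSystemWithBase

variable {ι V : Type*} [Fintype ι] [AddCommGroup V] [Module ℝ V]
  (P : RootSystemWithBase ι V)

/-- The Weyl group: the subgroup of linear automorphisms of `V` generated by the
reflections `v ↦ v - ⟨α^∨, v⟩ • α` for roots `α`. -/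
def weylGroup : Subgroup (V ≃ₗ[ℝ] V) :=
  Subgroup.closure {w | ∃ α ∈ P.R, ∀ v, w v = v - P.coroot α v • α}

/-- The orbit `W.x` of a point `x` under the Weyl group. -/
def orbit (x : V) : Set V := {y | ∃ w ∈ P.weylGroup, w x = y}

/-- A dual half-apartment: `{v | f_i(v) ≤ k}` or `{v | f_i(v) ≥ k}` for a fundamental
coweight functional `f_i` (dual basis to the simple roots) and `k ∈ ℝ`. -/
def IsDualHalfApartment (H : Set V) : Prop :=
  ∃ (i : ι) (k : ℝ),
    H = {v | P.simple.coord i v ≤ k} ∨ H = {v | k ≤ P.simple.coord i v}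

/-- The dual convex hull of `Y`: the intersection of all dual half-apartments
containing `Y` (the empty intersection being all of `V`). -/
def dconv (Y : Set V) : Set V :=
  ⋂₀ {H | P.IsDualHalfApartment H ∧ Y ⊆ H}

/-- The fundamental Weyl chamber `C_f = {v | ⟨α_i^∨, v⟩ ≥ 0 for all i}`. -/
def fundChamber : Set V := {v | ∀ i, 0 ≤ P.coroot (P.simple i) v}

/-- The positive cone `C⁺`, the set of nonnegative linear combinations of simple roots. -/
def posCone : Set V :=
  {v | ∃ t : ι → ℝ, (∀ i, 0 ≤ t i) ∧ v = ∑ i, t i • P.simple i}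

/-- Irreducibility: the base admits no partition into two nonempty mutually
orthogonal subsets. -/
def IsIrreducible : Prop :=
  ∀ s : Set ι,
    (∀ i ∈ s, ∀ j ∉ s, P.coroot (P.simple i) (P.simple j) = 0 ∧
        P.coroot (P.simple j) (P.simple i) = 0) →
    s = ∅ ∨ s = Set.univ

end RootSystemWithBase

/-!
For dominant `x`, every point `w x` of the orbit lies below `x` in each simple-root coordinate:
write `w` as a word in the simple reflections; either its last letter `s_j` lowers `x` by the
nonnegative multiple `⟨α_j^∨, x⟩` of the positive root `w' α_j`, or the deletion condition makes
the word shorter. This gives the upper half-apartments. For the lower ones, the orbit sum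
`∑_w w x` is `W`-invariant, hence killed by every simple coroot, hence zero (the simple coroots
detect zero through a `W`-invariant inner product). So every coordinate is nonpositive somewhere
on the orbit, while, by the same averaging and the upper bound, dominant points have nonnegative
coordinates.
-/

namespace RootSystemWithBase

open Set Module

variable {ι V : Type*} [Fintype ι] [AddCommGroup V] [Module ℝ V] (P : RootSystemWithBase ι V)

lemma ne_zero_of_mem {β : V} (hβ : β ∈ P.R) : β ≠ 0 := by
  rintro rfl
  simpa using P.coroot_self 0 hβ

lemma span_R_eq_top : Submodule.span ℝ P.R = ⊤ :=
  top_unique <| P.simple.span_eq.symm.le.trans <|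
    Submodule.span_mono <| range_subset_iff.2 P.simple_mem

noncomputable def reflection {β : V} (hβ : β ∈ P.R) : V ≃ₗ[ℝ] V :=
  Module.reflection (P.coroot_self β hβ)

lemma reflection_apply {β : V} (hβ : β ∈ P.R) (v : V) :
    P.reflection hβ v = v - P.coroot β v • β :=
  Module.reflection_apply _ _

lemma reflection_inv {β : V} (hβ : β ∈ P.R) : (P.reflection hβ)⁻¹ = P.reflection hβ := rfl

lemma reflection_mul_self {β : V} (hβ : β ∈ P.R) : P.reflection hβ * P.reflection hβ = 1 :=
  mul_eq_one_iff_eq_inv.2 rfl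

lemma reflection_mem_weylGroup {β : V} (hβ : β ∈ P.R) : P.reflection hβ ∈ P.weylGroup :=
  Subgroup.subset_closure ⟨β, hβ, P.reflection_apply hβ⟩

lemma mapsTo_reflection {β : V} (hβ : β ∈ P.R) : MapsTo (P.reflection hβ) P.R P.R :=
  fun γ hγ ↦ (P.reflection_apply hβ γ).symm ▸ P.reflect_mem β hβ γ hγ

lemma eq_reflection_of_apply {w : V ≃ₗ[ℝ] V} {β : V} (hβ : β ∈ P.R)
    (hw : ∀ v, w v = v - P.coroot β v • β) : w = P.reflection hβ :=
  LinearEquiv.ext fun v ↦ (hw v).trans (P.reflection_apply hβ v).symm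

open scoped Pointwise in
lemma weylGroup_le_stabilizer : P.weylGroup ≤ MulAction.stabilizer (V ≃ₗ[ℝ] V) P.R := by
  refine Subgroup.closure_le _ |>.2 ?_
  rintro w ⟨β, hβ, hw⟩
  obtain rfl := P.eq_reflection_of_apply hβ hw
  rw [SetLike.mem_coe, MulAction.mem_stabilizer_iff, ← Set.image_smul]
  exact (bijOn_reflection_of_mapsTo _ (P.mapsTo_reflection hβ)).image_eq

open scoped Pointwise in
lemma apply_mem_R {w : V ≃ₗ[ℝ] V} (hw : w ∈ P.weylGroup) {β : V} (hβ : β ∈ P.R) : w β ∈ P.R := by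
  rw [← MulAction.mem_stabilizer_iff.1 (P.weylGroup_le_stabilizer hw)]
  exact Set.smul_mem_smul_set hβ

instance : Finite P.weylGroup := by
  have : Finite P.R := P.finR.to_subtype
  refine Finite.of_injective (fun w (β : P.R) ↦ (⟨w.1 β, P.apply_mem_R w.2 β.2⟩ : P.R)) ?_
  intro w w' h
  refine Subtype.ext <| LinearEquiv.toLinearMap_injective <| P.simple.ext fun i ↦ ?_
  exact congr_arg Subtype.val (congr_fun h ⟨_, P.simple_mem i⟩)

noncomputable instance : Fintype P.weylGroup := Fintype.ofFinite _

lemma coroot_eq_of_mapsTo {β : V} (hβ : β ∈ P.R) {g : Dual ℝ V} (hg : g β = 2)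
    (hgR : MapsTo (preReflection β g) P.R P.R) : P.coroot β = g :=
  Dual.eq_of_preReflection_mapsTo P.finR P.span_R_eq_top (P.coroot_self β hβ)
    (P.mapsTo_reflection hβ) hg hgR

lemma coroot_map {w : V ≃ₗ[ℝ] V} (hw : w ∈ P.weylGroup) {β : V} (hβ : β ∈ P.R) :
    P.coroot (w β) = P.coroot β ∘ₗ (w.symm : V →ₗ[ℝ] V) := by
  refine P.coroot_eq_of_mapsTo (P.apply_mem_R hw hβ) (by simp [P.coroot_self β hβ]) ?_
  intro γ hγ
  have := P.apply_mem_R hw (P.mapsTo_reflection hβ (P.apply_mem_R (inv_mem hw) hγ))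
  simpa [preReflection_apply, P.reflection_apply] using this

lemma reflection_eq_conj {w : V ≃ₗ[ℝ] V} (hw : w ∈ P.weylGroup) {β γ : V} (hβ : β ∈ P.R)
    (hγ : γ ∈ P.R) (h : w β = γ) : P.reflection hγ = w * P.reflection hβ * w⁻¹ := by
  subst h
  ext v
  simp [P.reflection_apply, P.coroot_map hw hβ]

lemma reflection_smul {β γ : V} (hβ : β ∈ P.R) (hγ : γ ∈ P.R) {c : ℝ} (h : γ = c • β) :
    P.reflection hγ = P.reflection hβ := by
  subst h
  have hc : c ≠ 0 := by rintro rfl; exact P.ne_zero_of_mem hγ (zero_smul ℝ β)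
  have hco : P.coroot (c • β) = c⁻¹ • P.coroot β := by
    refine P.coroot_eq_of_mapsTo hγ ?_ ?_
    · simp [P.coroot_self β hβ, hc]
    · intro γ hγ
      simpa [preReflection_apply, smul_smul, mul_right_comm _ _ c, hc, P.reflection_apply]
        using P.mapsTo_reflection hβ hγ
  ext v
  simp [P.reflection_apply, hco, smul_smul, mul_right_comm _ _ c, hc]

noncomputable def invForm : LinearMap.BilinForm ℝ V :=
  ∑ w : P.weylGroup, ∑ i, (LinearMap.mul ℝ ℝ).compl₁₂
    (P.simple.coord i ∘ₗ w.1.toLinearMap) (P.simple.coord i ∘ₗ w.1.toLinearMap)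

lemma invForm_apply (u v : V) :
    P.invForm u v = ∑ w : P.weylGroup, ∑ i, P.simple.repr (w.1 u) i * P.simple.repr (w.1 v) i := by
  simp [invForm]

lemma invForm_map {g : V ≃ₗ[ℝ] V} (hg : g ∈ P.weylGroup) (u v : V) :
    P.invForm (g u) (g v) = P.invForm u v := by
  simp only [invForm_apply]
  exact Fintype.sum_equiv (Equiv.mulRight ⟨g, hg⟩) _ _ fun w ↦ by simp [LinearEquiv.mul_apply]

lemma invForm_self_pos {v : V} (hv : v ≠ 0) : 0 < P.invForm v v := by
  obtain ⟨i, hi⟩ : ∃ i, P.simple.repr v i ≠ 0 := by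
    by_contra! h
    exact hv (P.simple.forall_coord_eq_zero_iff.1 h)
  rw [invForm_apply]
  calc 0 < ∑ i, P.simple.repr v i * P.simple.repr v i :=
        Finset.sum_pos' (fun _ _ ↦ mul_self_nonneg _) ⟨i, Finset.mem_univ _, mul_self_pos.2 hi⟩
    _ ≤ _ := Finset.single_le_sum
        (f := fun w : P.weylGroup ↦ ∑ i, P.simple.repr (w.1 v) i * P.simple.repr (w.1 v) i)
        (fun _ _ ↦ Finset.sum_nonneg fun _ _ ↦ mul_self_nonneg _) (Finset.mem_univ 1)

lemma two_mul_invForm_root {β : V} (hβ : β ∈ P.R) (v : V) :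
    2 * P.invForm β v = P.coroot β v * P.invForm β β := by
  have := P.invForm_map (P.reflection_mem_weylGroup hβ) β v
  simp only [P.reflection_apply, P.coroot_self β hβ, map_sub, map_smul, LinearMap.sub_apply,
    LinearMap.smul_apply, smul_eq_mul] at this
  linarith

lemma two_mul_invForm_self (v : V) : 2 * P.invForm v v =
    ∑ i, P.simple.repr v i * P.coroot (P.simple i) v * P.invForm (P.simple i) (P.simple i) := by
  calc 2 * P.invForm v v = 2 * P.invForm (∑ i, P.simple.repr v i • P.simple i) v := by
        rw [P.simple.sum_repr]
    _ = ∑ i, P.simple.repr v i * (2 * P.invForm (P.simple i) v) := by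
        rw [map_sum, LinearMap.sum_apply, Finset.mul_sum]
        simp [mul_left_comm]
    _ = _ := by simp only [P.two_mul_invForm_root (P.simple_mem _), mul_assoc]

lemma eq_zero_of_forall_coroot_simple_eq_zero {v : V} (h : ∀ i, P.coroot (P.simple i) v = 0) :
    v = 0 := by
  by_contra hv
  have := P.two_mul_invForm_self v
  simp only [h, mul_zero, zero_mul, Finset.sum_const_zero] at this
  linarith [P.invForm_self_pos hv]

lemma exists_coroot_simple_pos {v : V} (hv : v ≠ 0) (hnonneg : ∀ i, 0 ≤ P.simple.repr v i) :
    ∃ i, 0 < P.coroot (P.simple i) v := by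
  by_contra! h
  have : 2 * P.invForm v v ≤ 0 := by
    rw [two_mul_invForm_self]
    exact Finset.sum_nonpos fun i _ ↦ mul_nonpos_of_nonpos_of_nonneg
      (mul_nonpos_of_nonneg_of_nonpos (hnonneg i) (h i))
      (P.invForm_self_pos (P.ne_zero_of_mem (P.simple_mem i))).le
  linarith [P.invForm_self_pos hv]

noncomputable def simpleReflection (i : ι) : V ≃ₗ[ℝ] V := P.reflection (P.simple_mem i)

lemma simpleReflection_apply (i : ι) (v : V) :
    P.simpleReflection i v = v - P.coroot (P.simple i) v • P.simple i :=
  P.reflection_apply _ v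

lemma simpleReflection_mem_weylGroup (i : ι) : P.simpleReflection i ∈ P.weylGroup :=
  P.reflection_mem_weylGroup _

lemma simpleReflection_mul_self (i : ι) : P.simpleReflection i * P.simpleReflection i = 1 :=
  P.reflection_mul_self _

lemma repr_simpleReflection_of_ne {i k : ι} (h : k ≠ i) (v : V) :
    P.simple.repr (P.simpleReflection i v) k = P.simple.repr v k := by
  simp [simpleReflection_apply, h.symm]

noncomputable def height : V →ₗ[ℝ] ℝ := ∑ i, P.simple.coord i

lemma height_simpleReflection (i : ι) (v : V) :
    P.height (P.simpleReflection i v) = P.height v - P.coroot (P.simple i) v := by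
  simp [height, simpleReflection_apply, Finset.sum_sub_distrib]

lemma eq_smul_simple_of_repr_eq_zero {v : V} {i : ι} (h : ∀ k ≠ i, P.simple.repr v k = 0) :
    v = P.simple.repr v i • P.simple i := by
  conv_lhs => rw [← P.simple.sum_repr v]
  exact Finset.sum_eq_single i (fun k _ hk ↦ by rw [h k hk, zero_smul]) (by simp)

lemma reflection_eq_simpleReflection {β : V} (hβ : β ∈ P.R) {i : ι}
    (h : ∀ k ≠ i, P.simple.repr β k = 0) : P.reflection hβ = P.simpleReflection i :=
  P.reflection_smul _ hβ (P.eq_smul_simple_of_repr_eq_zero h)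

noncomputable def wordProd (l : List ι) : V ≃ₗ[ℝ] V := (l.map P.simpleReflection).prod

@[simp] lemma wordProd_nil : P.wordProd [] = 1 := rfl

@[simp] lemma wordProd_cons (i : ι) (l : List ι) :
    P.wordProd (i :: l) = P.simpleReflection i * P.wordProd l := by
  simp [wordProd]

@[simp] lemma wordProd_append (l l' : List ι) :
    P.wordProd (l ++ l') = P.wordProd l * P.wordProd l' := by
  simp [wordProd]

lemma wordProd_inv (l : List ι) : (P.wordProd l)⁻¹ = P.wordProd l.reverse := by
  simp [wordProd, List.prod_inv_reverse, Function.comp_def, simpleReflection, reflection_inv]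
  rfl

lemma wordProd_mem_weylGroup (l : List ι) : P.wordProd l ∈ P.weylGroup :=
  P.weylGroup.list_prod_mem <| by simpa using fun i _ ↦ P.simpleReflection_mem_weylGroup i

lemma exists_wordProd_eq_reflection_of_nonneg {β : V} (hβ : β ∈ P.R)
    (hpos : ∀ i, 0 ≤ P.simple.repr β i) : ∃ l, P.wordProd l = P.reflection hβ := by
  -- Take a counterexample of minimal height; a simple reflection `s_i` with `⟨α_i^∨, β⟩ > 0`
  -- conjugates its reflection into that of a lower positive root.
  by_contra! hne
  obtain ⟨β, ⟨hβ, hpos, hne⟩, hmin⟩ := Set.exists_min_image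
    {β | ∃ hβ : β ∈ P.R, (∀ i, 0 ≤ P.simple.repr β i) ∧ ∀ l, P.wordProd l ≠ P.reflection hβ}
    P.height (P.finR.subset fun _ h ↦ h.1) ⟨β, hβ, hpos, hne⟩
  obtain ⟨i, hi⟩ := P.exists_coroot_simple_pos (P.ne_zero_of_mem hβ) hpos
  by_cases hsupp : ∀ k ≠ i, P.simple.repr β k = 0
  · exact hne [i] (by simp [P.reflection_eq_simpleReflection hβ hsupp])
  push Not at hsupp
  obtain ⟨k, hki, hk⟩ := hsupp
  set γ := P.simpleReflection i β
  have hγ : γ ∈ P.R := P.mapsTo_reflection _ hβ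
  have hγk : 0 < P.simple.repr γ k := by
    rw [P.repr_simpleReflection_of_ne hki]
    exact (hpos k).lt_of_ne' hk
  have hγpos : ∀ j, 0 ≤ P.simple.repr γ j :=
    (P.base_prop γ hγ).resolve_right fun h ↦ (h k).not_gt hγk
  have hγlt : P.height γ < P.height β := by
    rw [P.height_simpleReflection]
    linarith
  obtain ⟨l, hl⟩ : ∃ l, P.wordProd l = P.reflection hγ := by
    by_contra! h
    exact (hmin γ ⟨hγ, hγpos, h⟩).not_gt hγlt
  have hβγ : P.simpleReflection i γ = β :=
    Module.involutive_reflection (P.coroot_self _ (P.simple_mem i)) β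
  apply hne (i :: l ++ [i])
  rw [P.reflection_eq_conj (P.simpleReflection_mem_weylGroup i) hγ hβ hβγ, ← hl]
  simp [simpleReflection, reflection_inv, mul_assoc]

lemma exists_wordProd_eq {w : V ≃ₗ[ℝ] V} (hw : w ∈ P.weylGroup) : ∃ l, P.wordProd l = w := by
  induction hw using Subgroup.closure_induction with
  | mem w hw =>
    obtain ⟨β, hβ, hw⟩ := hw
    obtain rfl := P.eq_reflection_of_apply hβ hw
    rcases P.base_prop β hβ with hpos | hneg
    · exact P.exists_wordProd_eq_reflection_of_nonneg hβ hpos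
    · have hβ' : -β ∈ P.R := by
        simpa [P.reflection_apply, P.coroot_self β hβ, two_smul] using P.mapsTo_reflection hβ hβ
      obtain ⟨l, hl⟩ := P.exists_wordProd_eq_reflection_of_nonneg hβ' (by simpa using hneg)
      exact ⟨l, hl.trans (P.reflection_smul hβ hβ' (neg_one_smul ℝ β).symm)⟩
  | one => exact ⟨[], rfl⟩
  | mul w w' _ _ hw hw' =>
    obtain ⟨⟨l, rfl⟩, ⟨l', rfl⟩⟩ := And.intro hw hw'
    exact ⟨l ++ l', P.wordProd_append l l'⟩
  | inv w _ hw =>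
    obtain ⟨l, rfl⟩ := hw
    exact ⟨l.reverse, (P.wordProd_inv l).symm⟩

lemma exists_shorter_wordProd_eq_mul_simpleReflection (l : List ι) (j : ι)
    (h : ∀ k, P.simple.repr (P.wordProd l (P.simple j)) k ≤ 0) :
    ∃ l', P.wordProd l' = P.wordProd l * P.simpleReflection j ∧ l'.length < l.length := by
  induction l with
  | nil => exact absurd (h j) (by simp)
  | cons i t ih =>
    set u := P.wordProd t (P.simple j)
    have hu : u ∈ P.R := P.apply_mem_R (P.wordProd_mem_weylGroup t) (P.simple_mem j)
    rcases P.base_prop u hu with hpos | hneg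
    -- A positive root made negative by `s_i` is a multiple of `α_i`, so `s_i = s_u = t s_j t⁻¹`.
    · have hsupp : ∀ k ≠ i, P.simple.repr u k = 0 := fun k hk ↦
        le_antisymm (by simpa [P.repr_simpleReflection_of_ne hk, u] using h k) (hpos k)
      have hcomm : P.simpleReflection i * P.wordProd t = P.wordProd t * P.simpleReflection j := by
        rw [← P.reflection_eq_simpleReflection hu hsupp,
          P.reflection_eq_conj (P.wordProd_mem_weylGroup t) (P.simple_mem j) hu rfl]
        simp [simpleReflection]
      refine ⟨t, ?_, by simp⟩
      rw [wordProd_cons, hcomm, mul_assoc, P.simpleReflection_mul_self, mul_one]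
    · obtain ⟨t', ht', hlen⟩ := ih hneg
      exact ⟨i :: t', by simp [ht', mul_assoc], by simpa⟩

lemma repr_wordProd_apply_le {x : V} (hx : x ∈ P.fundChamber) (l : List ι) (i : ι) :
    P.simple.repr (P.wordProd l x) i ≤ P.simple.repr x i := by
  induction hn : l.length using Nat.strong_induction_on generalizing l with
  | _ n ih =>
  subst hn
  rcases l.eq_nil_or_concat with rfl | ⟨l, j, rfl⟩
  · simp
  rcases P.base_prop _ (P.apply_mem_R (P.wordProd_mem_weylGroup l) (P.simple_mem j))
    with hpos | hneg
  · calc P.simple.repr (P.wordProd (l.concat j) x) i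
        = P.simple.repr (P.wordProd l x) i
          - P.coroot (P.simple j) x * P.simple.repr (P.wordProd l (P.simple j)) i := by
          simp [simpleReflection, P.reflection_apply]
      _ ≤ P.simple.repr (P.wordProd l x) i := sub_le_self _ (mul_nonneg (hx j) (hpos i))
      _ ≤ P.simple.repr x i := ih _ (by simp) l rfl
  · obtain ⟨l', hl', hlen'⟩ := P.exists_shorter_wordProd_eq_mul_simpleReflection l j hneg
    have : P.wordProd (l.concat j) = P.wordProd l' := by simp [hl', simpleReflection]
    rw [this]
    exact ih _ (by simp; omega) l' rfl

lemma coord_apply_le_of_mem_fundChamber {x : V} (hx : x ∈ P.fundChamber)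
    {w : V ≃ₗ[ℝ] V} (hw : w ∈ P.weylGroup) (i : ι) :
    P.simple.coord i (w x) ≤ P.simple.coord i x := by
  obtain ⟨l, rfl⟩ := P.exists_wordProd_eq hw
  exact P.repr_wordProd_apply_le hx l i

lemma sum_weylGroup_apply (x : V) : ∑ w : P.weylGroup, w.1 x = 0 := by
  refine P.eq_zero_of_forall_coroot_simple_eq_zero fun i ↦ ?_
  have hfix : P.simpleReflection i (∑ w : P.weylGroup, w.1 x) = ∑ w : P.weylGroup, w.1 x := by
    rw [map_sum]
    exact Fintype.sum_equiv (Equiv.mulLeft ⟨_, P.simpleReflection_mem_weylGroup i⟩) _ _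
      fun w ↦ by simp [LinearEquiv.mul_apply]
  rw [simpleReflection_apply, sub_eq_self, smul_eq_zero] at hfix
  exact hfix.resolve_right (P.ne_zero_of_mem (P.simple_mem i))

lemma coord_nonneg_of_mem_fundChamber {x : V} (hx : x ∈ P.fundChamber) (i : ι) :
    0 ≤ P.simple.coord i x := by
  have hsum :
      ∑ w : P.weylGroup, P.simple.coord i (w.1 x) ≤ ∑ _w : P.weylGroup, P.simple.coord i x :=
    Finset.sum_le_sum fun w _ ↦ P.coord_apply_le_of_mem_fundChamber hx w.2 i
  rw [← map_sum, P.sum_weylGroup_apply, map_zero, Finset.sum_const, nsmul_eq_mul] at hsum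
  exact nonneg_of_mul_nonneg_right hsum (by exact_mod_cast Fintype.card_pos)

lemma exists_coord_apply_nonpos (x : V) (i : ι) :
    ∃ w ∈ P.weylGroup, P.simple.coord i (w x) ≤ 0 := by
  obtain ⟨w, -, hw⟩ := Finset.exists_le_of_sum_le Finset.univ_nonempty
    (f := fun w : P.weylGroup ↦ P.simple.coord i (w.1 x)) (g := 0)
    (le_of_eq (by rw [← map_sum, P.sum_weylGroup_apply, map_zero]; simp))
  exact ⟨w, w.2, hw⟩

lemma mem_posCone_iff {v : V} : v ∈ P.posCone ↔ ∀ i, 0 ≤ P.simple.coord i v := by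
  constructor
  · rintro ⟨t, ht, rfl⟩ i
    rw [Module.Basis.coord_apply, P.simple.repr_sum_self]
    exact ht i
  · exact fun h ↦ ⟨_, h, (P.simple.sum_repr v).symm⟩

lemma mem_dconv_iff {Y : Set V} {y : V} : y ∈ P.dconv Y ↔ ∀ i k,
    (Y ⊆ {v | P.simple.coord i v ≤ k} → P.simple.coord i y ≤ k) ∧
    (Y ⊆ {v | k ≤ P.simple.coord i v} → k ≤ P.simple.coord i y) := by
  simp only [dconv, IsDualHalfApartment, Set.mem_sInter]
  constructor
  · exact fun h i k ↦ ⟨fun hY ↦ h _ ⟨⟨i, k, .inl rfl⟩, hY⟩, fun hY ↦ h _ ⟨⟨i, k, .inr rfl⟩, hY⟩⟩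
  · rintro h H ⟨⟨i, k, rfl | rfl⟩, hY⟩
    exacts [(h i k).1 hY, (h i k).2 hY]

end RootSystemWithBase

theorem dconv_orbit_inter_fundChamber_general
    {ι V : Type*} [Fintype ι] [AddCommGroup V] [Module ℝ V]
    (P : RootSystemWithBase ι V)
    (x : V) (hx : x ∈ P.fundChamber) :
    P.dconv (P.orbit x) ∩ P.fundChamber
      = {y | y ∈ P.fundChamber ∧ x - y ∈ P.posCone} := by
  have hx_mem : x ∈ P.orbit x := ⟨1, one_mem _, rfl⟩
  have horbit_le : ∀ i, P.orbit x ⊆ {v | P.simple.coord i v ≤ P.simple.coord i x} := by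
    rintro i _ ⟨w, hw, rfl⟩
    exact P.coord_apply_le_of_mem_fundChamber hx hw i
  ext y
  simp only [Set.mem_inter_iff, Set.mem_ofPred_eq, P.mem_posCone_iff, map_sub, sub_nonneg]
  refine ⟨fun ⟨hy, hyC⟩ ↦ ⟨hyC, fun i ↦ (P.mem_dconv_iff.1 hy i _).1 (horbit_le i)⟩, ?_⟩
  rintro ⟨hyC, hyx⟩
  refine ⟨P.mem_dconv_iff.2 fun i k ↦ ⟨fun hY ↦ (hyx i).trans (hY hx_mem), fun hY ↦ ?_⟩, hyC⟩
  obtain ⟨w, hw, hwx⟩ := P.exists_coord_apply_nonpos x i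
  exact (hY ⟨w, hw, rfl⟩).trans (hwx.trans (P.coord_nonneg_of_mem_fundChamber hyC i))

/-- **Kostant convexity on the chamber level (Lemma on dual convex hulls).**
For an irreducible crystallographic root system with base, and a dominant point
`x ∈ C_f`, the intersection of the dual convex hull of the Weyl orbit `W.x` with
the fundamental Weyl chamber is exactly the set of dominant points `y` with
`x - y` in the positive cone. -/
theorem dconv_orbit_inter_fundChamber
    {ι V : Type*} [Fintype ι] [AddCommGroup V] [Module ℝ V]
    (P : RootSystemWithBase ι V) (hirr : P.IsIrreducible)
    (x : V) (hx : x ∈ P.fundChamber) :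
    P.dconv (P.orbit x) ∩ P.fundChamber
      = {y | y ∈ P.fundChamber ∧ x - y ∈ P.posCone} :=
  dconv_orbit_inter_fundChamber_general P x hx
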